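/- Fix a nonempty finite set D, an integer r ≥ 2, and an integer d. Let Δ be the set of maps α : D → Fin r → ℝ such that for every x ∈ D, 0 ≤ α x 0 < α x 1 < ⋯ < α x (r−1) < 1. Call n : D → Fin r → ℕ admissible if n x i ∈ {0,1} for all x, i and there is an integer r' with 0 < r' < r and Σ_i n x i = r' for every x ∈ D; write r'(n) for this common value and let 𝒩 be the set of admissible n. For α ∈ Δ and n ∈ 𝒩 define M(α,n) = ⌊(r'(n)·d + r'(n)·Σ_{x∈D} Σ_i α x i − r·Σ_{x∈D} Σ_i (n x i)·(α x i))/r⌋ ∈ ℤ. Then the set { (fun n ↦ M(α,n)) : α ∈ Δ } is a finite subset of 𝒩 → ℤ. -/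

import Mathlib

/-!
Every coordinate `M(α, n)` is bounded independently of `α`: all weights lie in `[0, 1]`, so the
numerator is at most `r (|d| + |D| r)` in absolute value. Hence the image consists of functions
from the finite set `𝒩` to a fixed finite interval of integers.
-/

open Set

lemma Set.Finite.of_forall_abs_le {ι : Type*} [Finite ι] {s : Set (ι → ℤ)} (B : ℤ)
    (h : ∀ F ∈ s, ∀ i, |F i| ≤ B) : s.Finite :=
  (Set.Finite.pi fun _ => Set.finite_Icc (-B) B).subset fun F hF i _ => abs_le.1 (h F hF i)

lemma finite_zero_one_valued {ι κ : Type*} [Finite ι] [Finite κ] (P : (ι → κ → ℕ) → Prop) :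
    Finite {n : ι → κ → ℕ // (∀ x i, n x i = 0 ∨ n x i = 1) ∧ P n} := by
  refine Finite.of_injective (fun n x i => decide (n.1 x i = 1)) fun n m h => ?_
  ext x i
  have := congrFun (congrFun h x) i
  rcases n.2.1 x i with hn | hn <;> rcases m.2.1 x i with hm | hm <;> simp_all

lemma Finset.sum_mem_Icc_zero_card_mul {ι : Type*} [Fintype ι] {g : ι → ℝ} {c : ℝ}
    (h : ∀ i, g i ∈ Set.Icc 0 c) : ∑ i, g i ∈ Set.Icc 0 (Fintype.card ι * c) :=
  ⟨Finset.sum_nonneg fun i _ => (h i).1, by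
    simpa using Finset.sum_le_card_nsmul Finset.univ g c fun i _ => (h i).2⟩

lemma abs_mul_add_mul_sub_mul_le {a r d S T M : ℝ} (ha : 0 ≤ a) (har : a ≤ r)
    (hS : S ∈ Icc 0 M) (hT : T ∈ Icc 0 M) : |a * d + a * S - r * T| ≤ r * (|d| + M) := by
  have hr : 0 ≤ r := ha.trans har
  have had : |a * d| ≤ r * |d| := by
    rw [abs_mul, abs_of_nonneg ha]
    exact mul_le_mul_of_nonneg_right har (abs_nonneg d)
  have hST : |a * S - r * T| ≤ r * M :=
    abs_sub_le_of_nonneg_of_le (mul_nonneg ha hS.1) (mul_le_mul har hS.2 hS.1 hr)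
      (mul_nonneg hr hT.1) (mul_le_mul_of_nonneg_left hT.2 hr)
  calc |a * d + a * S - r * T| = |a * d + (a * S - r * T)| := by rw [add_sub_assoc]
    _ ≤ |a * d| + |a * S - r * T| := abs_add_le _ _
    _ ≤ r * (|d| + M) := by rw [mul_add]; exact add_le_add had hST

lemma Int.abs_floor_div_le {E c : ℝ} {B : ℤ} (hc : 0 < c) (h : |E| ≤ c * B) :
    |⌊E / c⌋| ≤ B := by
  have hE : |E / c| ≤ B := by
    rw [abs_div, abs_of_pos hc, div_le_iff₀ hc, mul_comm]
    exact h
  obtain ⟨hlo, hhi⟩ := abs_le.1 hE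
  refine abs_le.2 ⟨Int.le_floor.2 (by exact_mod_cast hlo), ?_⟩
  exact_mod_cast (Int.floor_le (E / c)).trans hhi

theorem stmt_1 {D : Type*} [Fintype D] [Nonempty D] (r : ℕ) (hr : 2 ≤ r) (d : ℤ) :
    Set.Finite
      { F : {n : D → Fin r → ℕ //
              (∀ (x : D) (i : Fin r), n x i = 0 ∨ n x i = 1) ∧
              ∃ r' : ℕ, 0 < r' ∧ r' < r ∧ ∀ x : D, ∑ i, n x i = r'} → ℤ |
        ∃ α : D → Fin r → ℝ,
          (∀ x : D, 0 ≤ α x ⟨0, by omega⟩ ∧ StrictMono (α x) ∧ α x ⟨r - 1, by omega⟩ < 1) ∧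
          F = fun n =>
            ⌊(((∑ i, n.1 (Classical.arbitrary D) i : ℕ) : ℝ) * (d : ℝ)
                + ((∑ i, n.1 (Classical.arbitrary D) i : ℕ) : ℝ) * (∑ x : D, ∑ i, α x i)
                - (r : ℝ) * (∑ x : D, ∑ i, (n.1 x i : ℝ) * α x i)) / (r : ℝ)⌋ } := by
  have := finite_zero_one_valued (ι := D) (κ := Fin r)
    fun n => ∃ r' : ℕ, 0 < r' ∧ r' < r ∧ ∀ x : D, ∑ i, n x i = r'
  refine Set.Finite.of_forall_abs_le (|d| + Fintype.card D * r) ?_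
  rintro F ⟨α, hα, rfl⟩ ⟨n, hn01, r', -, hr'r, hsum⟩
  have hα_mem (x : D) (i : Fin r) : α x i ∈ Icc 0 1 := by
    obtain ⟨h0, hmono, h1⟩ := hα x
    exact ⟨h0.trans (hmono.monotone (Fin.le_def.2 (Nat.zero_le _))),
      (hmono.monotone (Fin.le_def.2 (Nat.le_sub_one_of_lt i.isLt))).trans h1.le⟩
  have hn_mem (x : D) (i : Fin r) : (n x i : ℝ) ∈ Icc (0 : ℝ) 1 := by
    rcases hn01 x i with h | h <;> simp [h]
  have hsum_le : ∑ i, (n (Classical.arbitrary D) i : ℝ) ≤ r := by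
    exact_mod_cast (hsum _).le.trans hr'r.le
  have hbound (g : D → Fin r → ℝ) (hg : ∀ x i, g x i ∈ Icc 0 1) :
      ∑ x, ∑ i, g x i ∈ Icc 0 (Fintype.card D * r : ℝ) := by
    simpa using Finset.sum_mem_Icc_zero_card_mul fun x =>
      Finset.sum_mem_Icc_zero_card_mul (hg x)
  refine Int.abs_floor_div_le (by positivity) ?_
  push_cast
  exact abs_mul_add_mul_sub_mul_le (by positivity) hsum_le (hbound α hα_mem)
    (hbound _ fun x i => unitInterval.mul_mem (hn_mem x i) (hα_mem x i))
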